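/- For nonzero k, k' ∈ ℂ, the GHZ-class states G_k and G_{k'} (where G_k is the 3-qubit state with components b₁₁₁ = b₀₀₁ = b₀₁₀ = 1, b₁₀₀ = k, and all others zero) are SLOCC-equivalent if and only if k = k'. Hence the rank-4 (GHZ) states form a one-complex-parameter family of SLOCC orbits parametrised by the quartic norm q(G_k) = −8k. -/

import Mathlib

/-- A 3-qubit state: a map `Fin 2 → Fin 2 → Fin 2 → ℂ` with components `a i j k`. -/
abbrev QState3 : Type := Fin 2 → Fin 2 → Fin 2 → ℂ

/-- The action of the SLOCC-equivalence group `SL(2,ℂ)×SL(2,ℂ)×SL(2,ℂ)` on 3-qubit states: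
`((g₁,g₂,g₃)·a)_{ijk} = Σ (g₁)_{ii'} (g₂)_{jj'} (g₃)_{kk'} a_{i'j'k'}`. -/
noncomputable def sloccAct (g₁ g₂ g₃ : Matrix.SpecialLinearGroup (Fin 2) ℂ) (a : QState3) : QState3 :=
  fun i j k => ∑ i' : Fin 2, ∑ j' : Fin 2, ∑ k' : Fin 2,
    (g₁ : Matrix (Fin 2) (Fin 2) ℂ) i i' * (g₂ : Matrix (Fin 2) (Fin 2) ℂ) j j' *
      (g₃ : Matrix (Fin 2) (Fin 2) ℂ) k k' * a i' j' k'

/-- The quartic norm `q` of a 3-qubit state (Cayley's hyperdeterminant up to scale). -/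
def quarticQ3 (a : QState3) : ℂ :=
  -2 * (a 1 1 1 * a 0 0 0 -
      (a 0 0 1 * a 1 1 0 + a 0 1 0 * a 1 0 1 + a 1 0 0 * a 0 1 1)) ^ 2 -
    8 * (a 1 1 1 * a 0 0 1 * a 0 1 0 * a 1 0 0 + a 0 0 0 * a 1 1 0 * a 1 0 1 * a 0 1 1 -
      (a 0 1 0 * a 1 0 0 * a 1 0 1 * a 0 1 1 + a 0 0 1 * a 1 0 0 * a 1 1 0 * a 0 1 1 +
        a 0 0 1 * a 0 1 0 * a 1 1 0 * a 1 0 1))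

/-- The symplectic (antisymmetric bilinear) form of two 3-qubit states. -/
def symplQ3 (a b : QState3) : ℂ :=
  a 1 1 1 * b 0 0 0 - a 0 0 0 * b 1 1 1 +
    (a 0 0 1 * b 1 1 0 + a 0 1 0 * b 1 0 1 + a 1 0 0 * b 0 1 1) -
    (a 1 1 0 * b 0 0 1 + a 1 0 1 * b 0 1 0 + a 0 1 1 * b 1 0 0)

/-- The GHZ-class representative `G_k = |111⟩ + |001⟩ + |010⟩ + k|100⟩`. -/
def Gfam (k : ℂ) : QState3 := fun i j l =>
  if (i, j, l) = (1, 1, 1) ∨ (i, j, l) = (0, 0, 1) ∨ (i, j, l) = (0, 1, 0) then 1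
  else if (i, j, l) = (1, 0, 0) then k
  else 0

/-- Action on the first slot only. -/
def act1 (g : Matrix (Fin 2) (Fin 2) ℂ) (a : QState3) : QState3 :=
  fun i j l => g i 0 * a 0 j l + g i 1 * a 1 j l

def act2 (g : Matrix (Fin 2) (Fin 2) ℂ) (a : QState3) : QState3 :=
  fun i j l => g j 0 * a i 0 l + g j 1 * a i 1 l

def act3 (g : Matrix (Fin 2) (Fin 2) ℂ) (a : QState3) : QState3 :=
  fun i j l => g l 0 * a i j 0 + g l 1 * a i j 1

lemma sloccAct_eq (g₁ g₂ g₃ : Matrix.SpecialLinearGroup (Fin 2) ℂ) (a : QState3) :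
    sloccAct g₁ g₂ g₃ a = act1 (g₁ : Matrix (Fin 2) (Fin 2) ℂ)
      (act2 (g₂ : Matrix (Fin 2) (Fin 2) ℂ) (act3 (g₃ : Matrix (Fin 2) (Fin 2) ℂ) a)) := by
  funext i j l
  simp [sloccAct, act1, act2, act3, Fin.sum_univ_two]
  ring

lemma q_act1 (g : Matrix (Fin 2) (Fin 2) ℂ) (a : QState3) :
    quarticQ3 (act1 g a) = (g 0 0 * g 1 1 - g 0 1 * g 1 0) ^ 2 * quarticQ3 a := by
  simp only [quarticQ3, act1]
  ring

lemma q_act2 (g : Matrix (Fin 2) (Fin 2) ℂ) (a : QState3) :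
    quarticQ3 (act2 g a) = (g 0 0 * g 1 1 - g 0 1 * g 1 0) ^ 2 * quarticQ3 a := by
  simp only [quarticQ3, act2]
  ring

lemma q_act3 (g : Matrix (Fin 2) (Fin 2) ℂ) (a : QState3) :
    quarticQ3 (act3 g a) = (g 0 0 * g 1 1 - g 0 1 * g 1 0) ^ 2 * quarticQ3 a := by
  simp only [quarticQ3, act3]
  ring

lemma det_one (g : Matrix.SpecialLinearGroup (Fin 2) ℂ) :
    (g : Matrix (Fin 2) (Fin 2) ℂ) 0 0 * (g : Matrix (Fin 2) (Fin 2) ℂ) 1 1 -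
      (g : Matrix (Fin 2) (Fin 2) ℂ) 0 1 * (g : Matrix (Fin 2) (Fin 2) ℂ) 1 0 = 1 := by
  have h := g.prop
  rwa [Matrix.det_fin_two] at h

lemma q_invariant (g₁ g₂ g₃ : Matrix.SpecialLinearGroup (Fin 2) ℂ) (a : QState3) :
    quarticQ3 (sloccAct g₁ g₂ g₃ a) = quarticQ3 a := by
  rw [sloccAct_eq, q_act1, q_act2, q_act3, det_one, det_one, det_one]
  ring

lemma q_Gfam (k : ℂ) : quarticQ3 (Gfam k) = -8 * k := by
  norm_num [quarticQ3, Gfam, Prod.ext_iff]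

lemma sloccAct_one (a : QState3) : sloccAct 1 1 1 a = a := by
  funext i j l
  simp [sloccAct, Fin.sum_univ_two, Matrix.one_apply]

/-- For nonzero `k, k'`, the GHZ-class states `G_k` and `G_{k'}` are SLOCC-equivalent iff
`k = k'`; the rank-4 orbits are parametrised by the quartic norm `q(G_k) = −8k`. -/
theorem GHZ_family_orbits :
    ∀ k k' : ℂ, k ≠ 0 → k' ≠ 0 →
      ((∃ g₁ g₂ g₃ : Matrix.SpecialLinearGroup (Fin 2) ℂ,
          sloccAct g₁ g₂ g₃ (Gfam k) = Gfam k') ↔ k = k') ∧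
      quarticQ3 (Gfam k) = -8 * k := by
  intro k k' hk hk'
  refine ⟨⟨?_, ?_⟩, q_Gfam k⟩
  · rintro ⟨g₁, g₂, g₃, h⟩
    have := q_invariant g₁ g₂ g₃ (Gfam k)
    rw [h, q_Gfam, q_Gfam] at this
    have h2 : k' = k := by
      have h8 : (8 : ℂ) ≠ 0 := by norm_num
      field_simp at this
      exact neg_inj.mp this
    exact h2.symm
  · rintro rfl
    exact ⟨1, 1, 1, sloccAct_one _⟩
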